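/- arXiv:2002.10019 — 2 statements merged into one kernel-verified Lean document; each statement's English description precedes it below -/
import Mathlib

section
/- Let N^δ be matrices with positive off-diagonal entries and zero row sums converging to N(0) (zero row sums, kernel spanned by e and ē as above), and let g^δ = e + α^δ ē + ḡ_δ be an eigenvector of N^δ with eigenvalue λ₁^δ, where ḡ_δ → 0 and α^δ is bounded away from 0 and ∞. Let π¹, π² be the left null vectors of N(0) as above and write H^δ = N^δ − N(0). Then (α^δ⟨H^δ ē, π¹⟩ + ⟨H^δ ḡ_δ, π¹⟩)⟨e + α^δ ē, π²⟩ = (α^δ⟨H^δ ē, π²⟩ + ⟨H^δ ḡ_δ, π²⟩)⟨e + α^δ ē, π¹⟩. -/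
open Matrix

/-- Let N^δ (positive off-diagonal entries, zero row sums) perturb N(0) (zero
row sums), H^δ = N^δ − N(0), and let g^δ = e + α^δ ē + ḡ_δ be an eigenvector of N^δ with
eigenvalue λ₁^δ, where π¹, π² are left null vectors of N(0) orthogonal to ḡ_δ. Then
(α^δ⟨H^δ ē, π¹⟩ + ⟨H^δ ḡ_δ, π¹⟩)⟨e + α^δ ē, π²⟩ =
(α^δ⟨H^δ ē, π²⟩ + ⟨H^δ ḡ_δ, π²⟩)⟨e + α^δ ē, π¹⟩. -/
theorem stmt_14 (n : ℕ) (Nδ N0 H : Matrix (Fin n) (Fin n) ℝ)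
    (hoff : ∀ i j, i ≠ j → 0 < Nδ i j)
    (hrowδ : ∀ i, ∑ j, Nδ i j = 0)
    (hrow0 : ∀ i, ∑ j, N0 i j = 0)
    (hH : H = Nδ - N0)
    (e ebar gbar : Fin n → ℝ) (he : e = fun _ => 1)
    (α lam : ℝ)
    (heig : Nδ *ᵥ (e + α • ebar + gbar) = lam • (e + α • ebar + gbar))
    (π₁ π₂ : Fin n → ℝ)
    (hπ₁null : π₁ ᵥ* N0 = 0) (hπ₂null : π₂ ᵥ* N0 = 0)
    (hgbarπ₁ : ∑ i, gbar i * π₁ i = 0) (hgbarπ₂ : ∑ i, gbar i * π₂ i = 0) :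
    (α * (∑ i, (H *ᵥ ebar) i * π₁ i) + ∑ i, (H *ᵥ gbar) i * π₁ i)
        * (∑ i, (e + α • ebar) i * π₂ i)
      = (α * (∑ i, (H *ᵥ ebar) i * π₂ i) + ∑ i, (H *ᵥ gbar) i * π₂ i)
        * (∑ i, (e + α • ebar) i * π₁ i) := by
  have hNδ : Nδ = N0 + H := by rw [hH]; abel
  have hHe : H *ᵥ e = 0 := by
    ext i
    simp only [hH, sub_mulVec, mulVec, dotProduct, he, mul_one, Pi.sub_apply, Pi.zero_apply,
      Matrix.sub_apply, Finset.sum_sub_distrib, hrowδ i, hrow0 i, sub_zero]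
  have key : ∀ π : Fin n → ℝ, π ᵥ* N0 = 0 → (∑ i, gbar i * π i = 0) →
      α * (∑ i, (H *ᵥ ebar) i * π i) + ∑ i, (H *ᵥ gbar) i * π i
        = lam * ∑ i, (e + α • ebar) i * π i := by
    intro π hnull hg
    have hN0 : ∀ v : Fin n → ℝ, ∑ i, (N0 *ᵥ v) i * π i = 0 := by
      intro v
      have h1 : π ⬝ᵥ (N0 *ᵥ v) = (π ᵥ* N0) ⬝ᵥ v := dotProduct_mulVec π N0 v
      rw [hnull, zero_dotProduct] at h1
      calc ∑ i, (N0 *ᵥ v) i * π i = π ⬝ᵥ (N0 *ᵥ v) := by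
            simp [dotProduct, mul_comm]
        _ = 0 := h1
    have hsum : ∑ i, (Nδ *ᵥ (e + α • ebar + gbar)) i * π i
        = lam * ∑ i, (e + α • ebar + gbar) i * π i := by
      rw [heig]
      simp [Finset.mul_sum, mul_assoc]
    rw [hNδ] at hsum
    simp only [add_mulVec, mulVec_add, mulVec_smul, Pi.add_apply, Pi.smul_apply,
      smul_eq_mul, add_mul, mul_add, mul_assoc, Finset.sum_add_distrib,
      ← Finset.mul_sum] at hsum
    rw [hN0 e, hN0 ebar, hN0 gbar, hHe, hg] at hsum
    simp only [Pi.zero_apply, zero_mul, Finset.sum_const_zero, mul_zero, zero_add,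
      add_zero] at hsum
    have hrhs : ∑ i, (e + α • ebar) i * π i
        = ∑ i, e i * π i + α * ∑ i, ebar i * π i := by
      simp only [Pi.add_apply, Pi.smul_apply, smul_eq_mul, add_mul, mul_assoc,
        Finset.sum_add_distrib, ← Finset.mul_sum]
    rw [hrhs]
    linarith [hsum]
  have k1 := key π₁ hπ₁null hgbarπ₁
  have k2 := key π₂ hπ₂null hgbarπ₂
  rw [k1, k2]
  ring
end

section
/- Let A be a linear operator on C₀(S) generating a strongly continuous positive contraction semigroup T_t associated with a Markov transition function P(t,x,·) on a locally compact separable metric space S. Suppose x ∈ S, B ⊆ S is closed with x ∉ B, and f ∈ D(A) satisfies 0 ≤ f ≤ 1, f = 1 on B, f = 0 on a neighborhood of x, and A f(x) = 0. Then lim_{t ↓ 0} P(t,x,B)/t ≤ lim_{t ↓ 0} (T_t f(x) − f(x))/t = A f(x) = 0, i.e., P(t,x,B) = o(t) as t ↓ 0. -/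
open Filter Topology MeasureTheory ZeroAtInfty

lemma ZeroAtInftyContinuousMap.integrable {X E : Type*} [TopologicalSpace X] [MeasurableSpace X]
    [OpensMeasurableSpace X] [NormedAddCommGroup E] [SecondCountableTopology E]
    [MeasurableSpace E] [BorelSpace E] (μ : Measure X) [IsFiniteMeasure μ] (f : C₀(X, E)) :
    Integrable f μ :=
  f.toBCF.integrable μ

lemma measureReal_le_integral_of_eq_one_on {X : Type*} [MeasurableSpace X] {μ : Measure X}
    [IsFiniteMeasure μ] {f : X → ℝ} (hf : Integrable f μ) (hf0 : 0 ≤ f) {B : Set X}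
    (hfB : ∀ y ∈ B, f y = 1) : μ.real B ≤ ∫ y, f y ∂μ := by
  calc μ.real B ≤ μ.real {y | 1 ≤ f y} :=
        measureReal_mono (fun y hy => (hfB y hy).ge)
    _ ≤ ∫ y, f y ∂μ := by
        simpa using mul_meas_ge_le_integral_of_nonneg (.of_forall hf0) hf 1

theorem stmt_19_general (S : Type*) [MetricSpace S] [MeasurableSpace S] [BorelSpace S]
    (P : ℝ → S → Measure S)
    (hP : ∀ t > (0 : ℝ), ∀ y, IsProbabilityMeasure (P t y))
    (x : S) (B : Set S)
    (f : C₀(S, ℝ)) (hf01 : ∀ y, f y ∈ Set.Icc (0 : ℝ) 1)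
    (hfB : ∀ y ∈ B, f y = 1)
    (U : Set S) (hU : U ∈ 𝓝 x) (hfU : ∀ y ∈ U, f y = 0)
    -- f is in the domain of the generator, with A f (x) = 0
    (hgen : Tendsto (fun t : ℝ => ((∫ y, f y ∂(P t x)) - f x) / t) (𝓝[>] (0 : ℝ)) (𝓝 0)) :
    Tendsto (fun t : ℝ => (P t x B).toReal / t) (𝓝[>] (0 : ℝ)) (𝓝 0) := by
  have hfx : f x = 0 := hfU x (mem_of_mem_nhds hU)
  refine tendsto_of_tendsto_of_tendsto_of_le_of_le' tendsto_const_nhds hgen ?_ ?_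
  · filter_upwards [self_mem_nhdsWithin] with t (ht : 0 < t)
    positivity
  · filter_upwards [self_mem_nhdsWithin] with t (ht : 0 < t)
    have := hP t ht x
    rw [hfx, sub_zero]
    gcongr
    exact measureReal_le_integral_of_eq_one_on (f.integrable _) (fun y => (hf01 y).1) hfB

/-- Dynkin–Kinney criterion at a point: Let P(t,x,·) be a Markov transition
function on a locally compact separable metric space S, whose semigroup T_t f x = ∫ f dP(t,x)
acts on C₀(S). If x ∈ S, B is closed with x ∉ B, and f ∈ C₀(S) ∩ D(A) satisfies 0 ≤ f ≤ 1,
f ≡ 1 on B, f ≡ 0 on a neighborhood of x, and A f(x) = 0 (i.e. (T_t f(x) − f(x))/t → 0 as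
t ↓ 0), then P(t,x,B)/t → 0, i.e. P(t,x,B) = o(t) as t ↓ 0. -/
theorem stmt_19 (S : Type*) [MetricSpace S] [LocallyCompactSpace S]
    [TopologicalSpace.SeparableSpace S] [MeasurableSpace S] [BorelSpace S]
    (P : ℝ → S → Measure S)
    (hP : ∀ t > (0 : ℝ), ∀ y, IsProbabilityMeasure (P t y))
    -- Chapman–Kolmogorov (semigroup property of the transition function)
    (hCK : ∀ s > (0 : ℝ), ∀ t > (0 : ℝ), ∀ y (B : Set S), MeasurableSet B →
      P (s + t) y B = ∫⁻ y', P t y' B ∂(P s y))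
    (x : S) (B : Set S) (hB : IsClosed B) (hxB : x ∉ B)
    (f : C₀(S, ℝ)) (hf01 : ∀ y, f y ∈ Set.Icc (0 : ℝ) 1)
    (hfB : ∀ y ∈ B, f y = 1)
    (U : Set S) (hU : U ∈ 𝓝 x) (hfU : ∀ y ∈ U, f y = 0)
    -- f is in the domain of the generator, with A f (x) = 0
    (hgen : Tendsto (fun t : ℝ => ((∫ y, f y ∂(P t x)) - f x) / t) (𝓝[>] (0 : ℝ)) (𝓝 0)) :
    Tendsto (fun t : ℝ => (P t x B).toReal / t) (𝓝[>] (0 : ℝ)) (𝓝 0) :=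
  stmt_19_general S P hP x B f hf01 hfB U hU hfU hgen
end
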